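/- arXiv:1501.00028 — 3 statements merged into one kernel-verified Lean document; each statement's English description precedes it below -/
import Mathlib

section
/- Let p, q be coprime integers and r, s integers with pr + qs = 1. Then there do not exist real numbers u, v such that cos(r v) = 0, cos(s u) = 0, cos((q − r) v) = 0, and cos((s + p) u) = 0 simultaneously. -/
/-!
If `cos (r v) = cos ((q - r) v) = 0`, then `r v` and `(q - r) v` are both odd multiples of `π / 2`,
so `(q - r) k = r l` with `k, l` odd; as `r` and `q - r` are coprime (by `p r + q s = 1`), both are
odd. Likewise `s` and `s + p` are odd. Then `q = (q - r) + r` and `p = (s + p) - s` are even, so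
`p r + q s` is even, which contradicts `p r + q s = 1`.
-/

open Real

lemma exists_odd_mul_eq_mul_odd_of_cos_eq_zero {m n : ℤ} {x : ℝ}
    (hm : cos (m * x) = 0) (hn : cos (n * x) = 0) :
    ∃ k l : ℤ, Odd k ∧ Odd l ∧ n * k = m * l := by
  obtain ⟨a, ha⟩ := cos_eq_zero_iff.mp hm
  obtain ⟨b, hb⟩ := cos_eq_zero_iff.mp hn
  refine ⟨2 * a + 1, 2 * b + 1, odd_two_mul_add_one a, odd_two_mul_add_one b, ?_⟩
  have key : ((n * (2 * a + 1) : ℤ) : ℝ) * (π / 2) = ((m * (2 * b + 1) : ℤ) : ℝ) * (π / 2) := by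
    push_cast
    linear_combination (m : ℝ) * hb - (n : ℝ) * ha
  exact_mod_cast mul_right_cancel₀ (by positivity) key

lemma odd_and_odd_of_mul_odd_eq_mul_odd {m n k l : ℤ} (hc : IsCoprime m n)
    (hk : Odd k) (hl : Odd l) (h : n * k = m * l) : Odd m ∧ Odd n := by
  have hmn : Odd m ↔ Odd n := by
    have := congrArg Odd h
    simp only [Int.odd_mul, hk, hl, and_true] at this
    exact (iff_of_eq this).symm
  have hm : Odd m := by
    by_contra hm
    have hn : ¬Odd n := hmn.not.mp hm
    rw [Int.not_odd_iff_even, even_iff_two_dvd] at hm hn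
    have := Int.isUnit_iff.mp (hc.isUnit_of_dvd' hm hn)
    omega
  exact ⟨hm, hmn.mp hm⟩

lemma odd_and_odd_of_cos_mul_eq_zero {m n : ℤ} {x : ℝ} (hc : IsCoprime m n)
    (hm : cos (m * x) = 0) (hn : cos (n * x) = 0) : Odd m ∧ Odd n := by
  obtain ⟨k, l, hk, hl, h⟩ := exists_odd_mul_eq_mul_odd_of_cos_eq_zero hm hn
  exact odd_and_odd_of_mul_odd_eq_mul_odd hc hk hl h

theorem no_common_cosine_zero_general (p q r s : ℤ)
    (h : p * r + q * s = 1) :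
    ¬ ∃ u v : ℝ,
        Real.cos ((r : ℝ) * v) = 0 ∧
        Real.cos ((s : ℝ) * u) = 0 ∧
        Real.cos (((q : ℝ) - (r : ℝ)) * v) = 0 ∧
        Real.cos (((s : ℝ) + (p : ℝ)) * u) = 0 := by
  rintro ⟨u, v, hr, hs, hqr, hsp⟩
  obtain ⟨hr_odd, hqr_odd⟩ := odd_and_odd_of_cos_mul_eq_zero (n := q - r)
    ⟨p + s, s, by linear_combination h⟩ hr (by push_cast; exact hqr)
  obtain ⟨hs_odd, hsp_odd⟩ := odd_and_odd_of_cos_mul_eq_zero (n := s + p)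
    ⟨q - r, r, by linear_combination h⟩ hs (by push_cast; exact hsp)
  have hq : Even q := by simpa using hqr_odd.add_odd hr_odd
  have hp : Even p := by simpa using hsp_odd.sub_odd hs_odd
  have : Even (p * r + q * s) := (hp.mul_right r).add (hq.mul_right s)
  exact Int.not_even_one (h ▸ this)

/-- **No simultaneous vanishing of the four cosines.**  If `p, q` are coprime integers
and `r, s` are integers with `pr + qs = 1`, then there are no real numbers `u, v` with
`cos(rv) = cos(su) = cos((q−r)v) = cos((s+p)u) = 0` simultaneously. -/
theorem no_common_cosine_zero (p q r s : ℤ)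
    (hcop : IsCoprime p q) (h : p * r + q * s = 1) :
    ¬ ∃ u v : ℝ,
        Real.cos ((r : ℝ) * v) = 0 ∧
        Real.cos ((s : ℝ) * u) = 0 ∧
        Real.cos (((q : ℝ) - (r : ℝ)) * v) = 0 ∧
        Real.cos (((s : ℝ) + (p : ℝ)) * u) = 0 :=
  no_common_cosine_zero_general p q r s h
end

section
/- Define Ψ₂(u, v, τ) = cos(−rv)cos(su) − sin(−rv)sin(su)·τ for fixed integers r, s, and set A = cos(−rv), B = sin(−rv), C = cos(su), D = sin(su). If Ψ₂(u,v,τ) = 0 and |τ| < 1, then (AD + BCτ, BC + ADτ, BD) ≠ (0,0,0). -/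
/-- **Non-vanishing of the gradient quantities for `Ψ₂`.**  Fix integers `r, s` and
real numbers `u, v, τ` with `|τ| < 1`.  Write `A = cos(−rv)`, `B = sin(−rv)`,
`C = cos(su)`, `D = sin(su)`.  If `Ψ₂(u,v,τ) = A·C − B·D·τ = 0`, then the three
quantities `A·D + B·C·τ`, `B·C + A·D·τ`, `B·D` cannot all vanish. -/
theorem psi2_gradient_nonzero (r s : ℤ) (u v τ : ℝ) (hτ : |τ| < 1)
    (hΨ : Real.cos (-((r : ℝ) * v)) * Real.cos ((s : ℝ) * u)
        - Real.sin (-((r : ℝ) * v)) * Real.sin ((s : ℝ) * u) * τ = 0) :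
    ¬ (Real.cos (-((r : ℝ) * v)) * Real.sin ((s : ℝ) * u)
          + Real.sin (-((r : ℝ) * v)) * Real.cos ((s : ℝ) * u) * τ = 0 ∧
       Real.sin (-((r : ℝ) * v)) * Real.cos ((s : ℝ) * u)
          + Real.cos (-((r : ℝ) * v)) * Real.sin ((s : ℝ) * u) * τ = 0 ∧
       Real.sin (-((r : ℝ) * v)) * Real.sin ((s : ℝ) * u) = 0) := by
  rintro ⟨h1, h2, h3⟩
  have pA := Real.sin_sq_add_cos_sq (-((r : ℝ) * v))
  have pC := Real.sin_sq_add_cos_sq ((s : ℝ) * u)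
  set A := Real.cos (-((r : ℝ) * v))
  set B := Real.sin (-((r : ℝ) * v))
  set C := Real.cos ((s : ℝ) * u)
  set D := Real.sin ((s : ℝ) * u)
  rcases mul_eq_zero.mp h3 with hB | hD
  · have hA2 : A ^ 2 = 1 := by nlinarith
    have hAC : A * C = 0 := by rw [hB] at hΨ; linarith
    have hC : C = 0 := by
      rcases mul_eq_zero.mp hAC with h | h
      · exfalso; nlinarith
      · exact h
    have hAD : A * D = 0 := by rw [hB, hC] at h1; linarith
    rcases mul_eq_zero.mp hAD with h | h <;> nlinarith
  · have hC2 : C ^ 2 = 1 := by nlinarith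
    have hAC : A * C = 0 := by rw [hD] at hΨ; linarith
    have hA : A = 0 := by
      rcases mul_eq_zero.mp hAC with h | h
      · exact h
      · exfalso; nlinarith
    have hBC : B * C = 0 := by rw [hD, hA] at h2; linarith
    rcases mul_eq_zero.mp hBC with h | h <;> nlinarith
end

section
/- Let p > 0 be odd and q an integer coprime to p. The parametrized arc t ↦ (qt, (q−p)t) for t ∈ [0, π], considered in the pillowcase P = ℝ²/(ℤ²⋉ℤ/2), meets the diagonal arc Δ = { (γ, γ) : γ ∈ [0,π] } in exactly (p+1)/2 points, namely at the parameter values t = 2πℓ/p for ℓ = 0, 1, …, (p−1)/2. -/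
open Real

/-- The relation on `ℝ²` whose quotient is the pillowcase `P = ℝ²/(ℤ²⋉ℤ/2)`:
two points are related iff they differ by translations by `2π` in each coordinate,
possibly composed with the involution `(γ,θ) ↦ (−γ,−θ)`. -/
def pillowRel (x y : ℝ × ℝ) : Prop :=
  ∃ m n : ℤ, y = (x.1 + 2 * π * m, x.2 + 2 * π * n) ∨
             y = (-x.1 + 2 * π * m, -x.2 + 2 * π * n)

/-!
A point `(x, y)` of the pillowcase lies on the diagonal arc iff `x ≡ y (mod 2π)`: the
translations and the involution both preserve this congruence, and conversely `x` can be
moved into `[0, π]` by a translation, possibly followed by the involution. Along the arc,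
`qt − (q − p)t = pt`, so the intersections are the `t ∈ [0, π]` with `pt ∈ 2πℤ`, i.e.
`t = 2πℓ/p` with `0 ≤ 2ℓ ≤ p`, which for odd `p` means `ℓ ≤ (p − 1)/2`.
-/

open Set

lemma exists_mem_Icc_eq_add_or_neg_add (x : ℝ) :
    ∃ γ ∈ Icc 0 π, ∃ m : ℤ, γ = x + 2 * π * m ∨ γ = -x + 2 * π * m := by
  have h2π : 0 < 2 * π := by positivity
  set m : ℤ := ⌊x / (2 * π)⌋
  have hr0 : 0 ≤ x - m * (2 * π) := Int.sub_floor_div_mul_nonneg x h2π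
  have hr2 : x - m * (2 * π) < 2 * π := Int.sub_floor_div_mul_lt x h2π
  rcases le_or_gt (x - m * (2 * π)) π with h | h
  · exact ⟨x - m * (2 * π), ⟨hr0, h⟩, -m, Or.inl (by push_cast; ring)⟩
  · exact ⟨2 * π - (x - m * (2 * π)), ⟨by linarith, by linarith⟩, m + 1,
      Or.inr (by push_cast; ring)⟩

theorem exists_pillowRel_diag_iff (x y : ℝ) :
    (∃ γ ∈ Icc 0 π, pillowRel (x, y) (γ, γ)) ↔ ∃ k : ℤ, x - y = 2 * π * k := by
  constructor
  · rintro ⟨γ, -, m, n, h | h⟩ <;> simp only [Prod.mk.injEq] at h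
    · exact ⟨n - m, by push_cast; linarith [h.1, h.2]⟩
    · exact ⟨m - n, by push_cast; linarith [h.1, h.2]⟩
  · rintro ⟨k, hk⟩
    obtain ⟨γ, hγ, m, h | h⟩ := exists_mem_Icc_eq_add_or_neg_add x
    · exact ⟨γ, hγ, m, m + k, Or.inl (Prod.ext h (by push_cast; linarith))⟩
    · exact ⟨γ, hγ, m, m - k, Or.inr (Prod.ext h (by push_cast; linarith))⟩

theorem exists_mul_eq_two_pi_mul_int_iff {p : ℤ} (hp : 0 < p) (hodd : Odd p) {t : ℝ}
    (ht : t ∈ Icc 0 π) :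
    (∃ k : ℤ, p * t = 2 * π * k) ↔ ∃ ℓ : ℕ, (ℓ : ℤ) ≤ (p - 1) / 2 ∧ t = 2 * π * ℓ / p := by
  have hp' : (0 : ℝ) < p := by exact_mod_cast hp
  constructor
  · rintro ⟨k, hk⟩
    have hk0 : 0 ≤ k := by
      have : (0 : ℝ) ≤ 2 * π * k := by rw [← hk]; exact mul_nonneg hp'.le ht.1
      exact_mod_cast nonneg_of_mul_nonneg_right this (by positivity)
    have h2k : 2 * k ≤ p := by
      have : 2 * π * k ≤ π * p := by rw [← hk]; nlinarith [ht.2]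
      exact_mod_cast (by nlinarith [pi_pos] : (2 * k : ℝ) ≤ p)
    lift k to ℕ using hk0
    refine ⟨k, by obtain ⟨r, rfl⟩ := hodd; omega, ?_⟩
    rw [eq_div_iff hp'.ne']
    push_cast at hk
    linarith
  · rintro ⟨ℓ, -, rfl⟩
    exact ⟨ℓ, by field_simp; push_cast; ring⟩

theorem two_bridge_diagonal_intersections_general (p q : ℤ)
    (hp : 0 < p) (hodd : Odd p) :
    ∀ t ∈ Set.Icc (0 : ℝ) π,
      ((∃ γ ∈ Set.Icc (0 : ℝ) π,
          pillowRel ((q : ℝ) * t, ((q : ℝ) - (p : ℝ)) * t) (γ, γ)) ↔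
        (∃ ℓ : ℕ, (ℓ : ℤ) ≤ (p - 1) / 2 ∧ t = 2 * π * ℓ / p)) := by
  intro t ht
  rw [exists_pillowRel_diag_iff, ← exists_mul_eq_two_pi_mul_int_iff hp hodd ht,
    show (q : ℝ) * t - (q - p) * t = p * t by ring]

/-- **Intersections of the 2-bridge arc with the diagonal.**  Let `p > 0` be odd and
`q` coprime to `p`.  The arc `t ↦ (qt, (q−p)t)`, `t ∈ [0,π]`, considered in the
pillowcase, meets the diagonal arc `Δ = {(γ,γ) : γ ∈ [0,π]}` exactly at the parameter
values `t = 2πℓ/p` for `ℓ = 0, 1, …, (p−1)/2` (hence in exactly `(p+1)/2` points). -/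
theorem two_bridge_diagonal_intersections (p q : ℤ)
    (hp : 0 < p) (hodd : Odd p) (hcop : IsCoprime p q) :
    ∀ t ∈ Set.Icc (0 : ℝ) π,
      ((∃ γ ∈ Set.Icc (0 : ℝ) π,
          pillowRel ((q : ℝ) * t, ((q : ℝ) - (p : ℝ)) * t) (γ, γ)) ↔
        (∃ ℓ : ℕ, (ℓ : ℤ) ≤ (p - 1) / 2 ∧ t = 2 * π * ℓ / p)) :=
  two_bridge_diagonal_intersections_general p q hp hodd
end
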